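/- arXiv:2001.05729 — 2 statements merged into one kernel-verified Lean document; each statement's English description precedes it below -/
import Mathlib

section
/- Let δ ∈ [0,1), α > −δ, β > 0. Let {S_s}_{s∈ℕ} and {T_s}_{s∈ℕ} be mutually independent random variables with S_s ~ Beta(1−δ, α+δ(s+1)) and T_s ~ Beta(β,β). Then the products ∏_{s=0}^{N} (1−S_s)·T_s converge to 0 almost surely as N → ∞. -/
open MeasureTheory ProbabilityTheory Filter

/-- The Beta(a, b) distribution on (0,1): density proportional to `x^(a-1) (1-x)^(b-1)`. -/
noncomputable def betaMeasure (a b : ℝ) : Measure ℝ :=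
  (volume.restrict (Set.Ioo (0:ℝ) 1)).withDensity fun x =>
    ENNReal.ofReal (x ^ (a - 1) * (1 - x) ^ (b - 1) /
      ∫ y in Set.Ioo (0:ℝ) 1, y ^ (a - 1) * (1 - y) ^ (b - 1))


lemma betaMeasure_compl_Ioo (a b : ℝ) : _root_.betaMeasure a b (Set.Ioo (0:ℝ) 1)ᶜ = 0 := by
  rw [_root_.betaMeasure, withDensity_apply _ measurableSet_Ioo.compl,
    Measure.restrict_restrict measurableSet_Ioo.compl, Set.compl_inter_self,
    Measure.restrict_empty, lintegral_zero_measure]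

lemma aux_mem_Ioo {Ω : Type*} [MeasurableSpace Ω] {P : Measure Ω} {f : Ω → ℝ} {a b : ℝ}
    (hf : Measurable f) (hmap : Measure.map f P = _root_.betaMeasure a b) :
    ∀ᵐ ω ∂P, f ω ∈ Set.Ioo (0:ℝ) 1 := by
  have h : P (f ⁻¹' (Set.Ioo (0:ℝ) 1)ᶜ) = 0 := by
    rw [← Measure.map_apply hf measurableSet_Ioo.compl, hmap, betaMeasure_compl_Ioo]
  have heq : {ω | ¬ f ω ∈ Set.Ioo (0:ℝ) 1} = f ⁻¹' (Set.Ioo (0:ℝ) 1)ᶜ := rfl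
  rw [ae_iff, heq]
  exact h

lemma aux_iIndepT {Ω : Type*} [MeasurableSpace Ω] {P : Measure Ω} {S T : ℕ → Ω → ℝ}
    (hindep : iIndepFun (fun i : ℕ ⊕ ℕ => Sum.elim S T i) P) :
    iIndepFun T P := by
  rw [iIndepFun_iff_measure_inter_preimage_eq_mul] at hindep ⊢
  intro s sets hsets
  have h := hindep (s.map ⟨Sum.inr, Sum.inr_injective⟩)
    (sets := Sum.elim (fun _ => Set.univ) sets) ?_
  · rw [Finset.prod_map] at h
    convert h using 2
    · ext x; simp [Finset.mem_map]
    · rfl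
  · rintro i hi
    simp only [Finset.mem_map, Function.Embedding.coeFn_mk] at hi
    obtain ⟨j, hj, rfl⟩ := hi
    simpa using hsets j hj


/-- For mutually independent `S s ~ Beta(1-δ, α+δ(s+1))` and
`T s ~ Beta(β,β)`, the products `∏_{s=0}^N (1-S s)(T s)` converge to `0` almost surely. -/
theorem stick_remainder_tendsto_zero_ae
    {Ω : Type*} [MeasurableSpace Ω] (P : Measure Ω) [IsProbabilityMeasure P]
    (δ α β : ℝ) (hδ0 : 0 ≤ δ) (hδ1 : δ < 1) (hα : -δ < α) (hβ : 0 < β)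
    (S T : ℕ → Ω → ℝ)
    (hSmeas : ∀ s, Measurable (S s)) (hTmeas : ∀ s, Measurable (T s))
    (hindep : iIndepFun (fun i : ℕ ⊕ ℕ => Sum.elim S T i) P)
    (hS : ∀ s : ℕ, Measure.map (S s) P = _root_.betaMeasure (1 - δ) (α + δ * (s + 1)))
    (hT : ∀ s : ℕ, Measure.map (T s) P = _root_.betaMeasure β β) :
    ∀ᵐ ω ∂P,
      Tendsto (fun N : ℕ => ∏ s ∈ Finset.range (N + 1), (1 - S s ω) * T s ω)
        atTop (nhds 0) := by
  have hTae : ∀ s, ∀ᵐ ω ∂P, T s ω ∈ Set.Ioo (0:ℝ) 1 :=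
    fun s => aux_mem_Ioo (hTmeas s) (hT s)
  have hTIoo : ∀ᵐ ω ∂P, ∀ s, T s ω ∈ Set.Ioo (0:ℝ) 1 := ae_all_iff.2 hTae
  have hSIoo : ∀ᵐ ω ∂P, ∀ s, S s ω ∈ Set.Ioo (0:ℝ) 1 :=
    ae_all_iff.2 fun s => aux_mem_Ioo (hSmeas s) (hS s)
  have hTindep := aux_iIndepT hindep
  set m : ℝ := ∫ ω, T 0 ω ∂P with hm
  have hTint_eq : ∀ s, ∫ ω, T s ω ∂P = m := by
    intro s
    have h1 : ∫ ω, T s ω ∂P = ∫ x, x ∂(Measure.map (T s) P) :=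
      (integral_map (hTmeas s).aemeasurable aestronglyMeasurable_id).symm
    have h2 : ∫ ω, T 0 ω ∂P = ∫ x, x ∂(Measure.map (T 0) P) :=
      (integral_map (hTmeas 0).aemeasurable aestronglyMeasurable_id).symm
    rw [hm, h1, h2, hT s, hT 0]
  have hTintg : ∀ s, Integrable (T s) P := fun s =>
    (integrable_const (1:ℝ)).mono' (hTmeas s).aestronglyMeasurable
      ((hTae s).mono fun ω h => by
        rw [Real.norm_eq_abs, abs_of_nonneg h.1.le]; exact h.2.le)
  have hm0 : 0 ≤ m := integral_nonneg_of_ae ((hTae 0).mono fun ω h => h.1.le)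
  have hm1 : m < 1 := by
    by_contra hcon
    push_neg at hcon
    have hsub : ∫ ω, (1 - T 0 ω) ∂P = 1 - m := by
      rw [integral_sub (integrable_const 1) (hTintg 0), integral_const]
      simp [hm]
    have hnn : 0 ≤ᵐ[P] fun ω => 1 - T 0 ω :=
      (hTae 0).mono fun ω h => by simp; linarith [h.2]
    have hle : ∫ ω, (1 - T 0 ω) ∂P ≤ 0 := by rw [hsub]; linarith
    have hzero : ∫ ω, (1 - T 0 ω) ∂P = 0 := le_antisymm hle (integral_nonneg_of_ae hnn)
    have hz := (integral_eq_zero_iff_of_nonneg_ae hnn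
      ((integrable_const 1).sub (hTintg 0))).1 hzero
    have hbad : ∀ᵐ ω ∂P, False := ((hTae 0).and hz).mono fun ω h => by
      have h2 := h.2
      simp only [Pi.zero_apply] at h2
      have := h.1.2
      linarith
    rw [ae_iff] at hbad
    simp at hbad
  have hprodint : ∀ n, ∫ ω, ∏ s ∈ Finset.range n, T s ω ∂P = m ^ n := by
    intro n
    induction n with
    | zero => simp
    | succ n ih =>
      have hind := hTindep.indepFun_prod_range_succ hTmeas n
      have h1 : ∫ ω, ∏ s ∈ Finset.range (n+1), T s ω ∂P
          = ∫ ω, ((∏ j ∈ Finset.range n, T j) * T n) ω ∂P := by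
        refine integral_congr_ae (Filter.Eventually.of_forall fun ω => ?_)
        simp [Finset.prod_range_succ, Finset.prod_apply]
      have hmp : Measurable (∏ j ∈ Finset.range n, T j) := by
        rw [Finset.prod_fn]; exact Finset.measurable_prod _ fun i _ => hTmeas i
      rw [h1, hind.integral_mul_eq_mul_integral hmp.aestronglyMeasurable (hTmeas n).aestronglyMeasurable]
      have h2 : ∫ ω, (∏ j ∈ Finset.range n, T j) ω ∂P = m ^ n := by
        simpa [Finset.prod_apply] using ih
      rw [h2, hTint_eq n, pow_succ]
  set g : ℕ → Ω → ENNReal :=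
    fun N ω => ENNReal.ofReal (∏ s ∈ Finset.range (N+1), T s ω) with hg
  have hgmeas : ∀ N, Measurable (g N) :=
    fun N => (Finset.measurable_prod _ fun i _ => hTmeas i).ennreal_ofReal
  have hYnn : ∀ N, 0 ≤ᵐ[P] fun ω => ∏ s ∈ Finset.range (N+1), T s ω :=
    fun N => hTIoo.mono fun ω h => Finset.prod_nonneg fun s _ => (h s).1.le
  have hYint : ∀ N, Integrable (fun ω => ∏ s ∈ Finset.range (N+1), T s ω) P := by
    intro N
    refine (integrable_const (1:ℝ)).mono'
      (Finset.measurable_prod _ fun i _ => hTmeas i).aestronglyMeasurable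
      (hTIoo.mono fun ω h => ?_)
    rw [Real.norm_eq_abs, abs_of_nonneg (Finset.prod_nonneg fun s _ => (h s).1.le)]
    exact Finset.prod_le_one (fun s _ => (h s).1.le) (fun s _ => (h s).2.le)
  have hglint : ∀ N, ∫⁻ ω, g N ω ∂P = ENNReal.ofReal (m ^ (N+1)) := by
    intro N
    rw [hg, ← ofReal_integral_eq_lintegral_ofReal (hYint N) (hYnn N), hprodint (N+1)]
  have hsummable : Summable fun N : ℕ => m ^ (N+1) := by
    simpa [pow_succ'] using (summable_geometric_of_lt_one hm0 hm1).mul_left m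
  have hsum : ∑' N, ∫⁻ ω, g N ω ∂P ≠ ⊤ := by
    simp_rw [hglint]
    rw [← ENNReal.ofReal_tsum_of_nonneg (fun N => pow_nonneg hm0 _) hsummable]
    exact ENNReal.ofReal_ne_top
  have hae_sum : ∀ᵐ ω ∂P, ∑' N, g N ω < ⊤ := by
    refine ae_lt_top (Measurable.ennreal_tsum hgmeas) ?_
    rw [lintegral_tsum (fun N => (hgmeas N).aemeasurable)]
    exact hsum
  filter_upwards [hTIoo, hSIoo, hae_sum] with ω hTω hSω hsumω
  have hg0 : Tendsto (fun N => g N ω) atTop (nhds 0) := by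
    have h := ENNReal.tendsto_cofinite_zero_of_tsum_ne_top hsumω.ne
    rwa [Nat.cofinite_eq_atTop] at h
  have hY0 : Tendsto (fun N => ∏ s ∈ Finset.range (N+1), T s ω) atTop (nhds 0) := by
    have h := (ENNReal.tendsto_toReal ENNReal.zero_ne_top).comp hg0
    simp only [Function.comp_def, ENNReal.toReal_zero] at h
    exact h.congr fun N =>
      ENNReal.toReal_ofReal (Finset.prod_nonneg fun s _ => (hTω s).1.le)
  refine squeeze_zero (fun N => Finset.prod_nonneg fun s _ => ?_) (fun N => ?_) hY0
  · exact mul_nonneg (by linarith [(hSω s).2]) (hTω s).1.le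
  · refine Finset.prod_le_prod (fun s _ => mul_nonneg (by linarith [(hSω s).2]) (hTω s).1.le)
      (fun s _ => ?_)
    nlinarith [(hSω s).1, (hSω s).2, (hTω s).1, (hTω s).2]
end

section
/- Let {S_{s,h} : s ∈ ℕ, 1 ≤ h ≤ 2^s} and {R_{s,h} : s ∈ ℕ, 1 ≤ h ≤ 2^s} be arbitrary numbers in [0,1], and let π_{s,h} be the multiscale stick-breaking weights built from them. For each leaf (N,h) at scale N define the remainder Δ_{N,h} = (1−S_{N,h}) · ∏_{r=0}^{N−1} (1−S_{r,a_r}) T_r, where a_r = ⌈h·2^{r−N}⌉ and T_r is the right/left split factor along the path to (N,h). Then for every N ∈ ℕ, ∑_{s=0}^{N} ∑_{h=1}^{2^s} π_{s,h} + ∑_{h=1}^{2^N} Δ_{N,h} = 1. -/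
/-!
Call `∏_{r<s} (1 - S (r,aᵣ)) Tᵣ` the mass reaching node `(s,h)`. A node keeps the fraction `S` of
the mass reaching it and passes the rest on, split as `1 - R : R` between its two daughters, so the
mass reaching the daughters of `(N,h)` adds up to the remainder `Δ (N,h)`. Hence replacing each
remainder at scale `N` by the weights and remainders of its daughters leaves the total unchanged,
and induction on `N` reduces the identity to `π (0,1) + Δ (0,1) = 1`.
-/

/-- The ancestor at scale `r ≤ s` of node `(s, h)`: the node `(r, ⌈h 2^(r-s)⌉)`. -/
def anc (s h r : ℕ) : ℕ := (h - 1) / 2 ^ (s - r) + 1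

/-- Multiscale stick-breaking weight of node `(s, h)` built from the stopping probabilities `S`
and the right-turn probabilities `R`:
`π (s,h) = S (s,h) * ∏_{r<s} (1 - S (r, aᵣ)) * Tᵣ`, where `aᵣ` is the ancestor of `(s,h)` at
scale `r` and `Tᵣ = R (r, aᵣ)` if the path goes right at scale `r`, `1 - R (r, aᵣ)` otherwise. -/
noncomputable def msWeight (S R : ℕ → ℕ → ℝ) (s h : ℕ) : ℝ :=
  S s h * ∏ r ∈ Finset.range s,
    ((1 - S r (anc s h r)) *
      (if anc s h (r + 1) = 2 * anc s h r then R r (anc s h r)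
       else 1 - R r (anc s h r)))

open Finset

lemma anc_self {s h : ℕ} (hh : 1 ≤ h) : anc s h s = h := by
  simp [anc, Nat.sub_add_cancel hh]

lemma anc_succ {s h r : ℕ} (hr : r ≤ s) : anc (s + 1) h r = anc s ((h - 1) / 2 + 1) r := by
  simp only [anc, Nat.add_sub_cancel, Nat.div_div_eq_div_mul, Nat.succ_sub hr, pow_succ']

lemma sum_Icc_two_mul (f : ℕ → ℝ) (m : ℕ) :
    ∑ h ∈ Icc 1 (2 * m), f h = ∑ h ∈ Icc 1 m, (f (2 * h - 1) + f (2 * h)) := by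
  induction m with
  | zero => simp
  | succ m ih =>
    rw [show 2 * (m + 1) = 2 * m + 1 + 1 by ring, sum_Icc_succ_top (by omega),
      sum_Icc_succ_top (by omega), ih, sum_Icc_succ_top (by omega)]
    rw [add_assoc]
    congr 3

section

variable (S R : ℕ → ℕ → ℝ)

noncomputable def pathMass (s h : ℕ) : ℝ :=
  ∏ r ∈ range s,
    ((1 - S r (anc s h r)) *
      (if anc s h (r + 1) = 2 * anc s h r then R r (anc s h r) else 1 - R r (anc s h r)))

lemma msWeight_eq (s h : ℕ) : msWeight S R s h = S s h * pathMass S R s h := rfl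

/-- `(h - 1) / 2 + 1` is the mother of `(s + 1, h)`, and `(s + 1, h)` is her right daughter iff
`h` is twice her index. -/
lemma pathMass_succ {s h : ℕ} (hh : 1 ≤ h) :
    pathMass S R (s + 1) h = pathMass S R s ((h - 1) / 2 + 1) *
      ((1 - S s ((h - 1) / 2 + 1)) *
        (if h = 2 * ((h - 1) / 2 + 1) then R s ((h - 1) / 2 + 1) else 1 - R s ((h - 1) / 2 + 1))) := by
  unfold pathMass
  rw [prod_range_succ, anc_self hh, anc_succ le_rfl, anc_self (by omega)]
  congr 1
  refine prod_congr rfl fun r hr => ?_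
  have hr : r < s := mem_range.mp hr
  rw [anc_succ hr.le, anc_succ hr]

lemma pathMass_daughters {s h : ℕ} (hh : 1 ≤ h) :
    pathMass S R (s + 1) (2 * h - 1) + pathMass S R (s + 1) (2 * h)
      = (1 - S s h) * pathMass S R s h := by
  rw [pathMass_succ S R (by omega), pathMass_succ S R (by omega),
    show (2 * h - 1 - 1) / 2 + 1 = h by omega, show (2 * h - 1) / 2 + 1 = h by omega,
    if_neg (by omega), if_pos rfl]
  ring

lemma sum_pathMass_succ (N : ℕ) :
    ∑ h ∈ Icc 1 (2 ^ (N + 1)), pathMass S R (N + 1) h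
      = ∑ h ∈ Icc 1 (2 ^ N), (1 - S N h) * pathMass S R N h := by
  rw [pow_succ', sum_Icc_two_mul]
  exact sum_congr rfl fun h hh => pathMass_daughters S R (mem_Icc.mp hh).1

theorem sum_msWeight_add_sum_remainder (N : ℕ) :
    ∑ s ∈ range (N + 1), ∑ h ∈ Icc 1 (2 ^ s), msWeight S R s h +
      ∑ h ∈ Icc 1 (2 ^ N), (1 - S N h) * pathMass S R N h = 1 := by
  induction N with
  | zero => simp [msWeight_eq, pathMass]
  | succ N ih =>
    have weight_add_remainder : ∀ h, msWeight S R (N + 1) h + (1 - S (N + 1) h) *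
        pathMass S R (N + 1) h = pathMass S R (N + 1) h := fun h => by
      rw [msWeight_eq]; ring
    rw [sum_range_succ, add_assoc, ← sum_add_distrib]
    simp only [weight_add_remainder, sum_pathMass_succ, ih]

end

theorem multiscale_stick_breaking_conservation_general
    (S R : ℕ → ℕ → ℝ)
    (N : ℕ) :
    ∑ s ∈ Finset.range (N + 1), ∑ h ∈ Finset.Icc 1 (2 ^ s), msWeight S R s h +
        ∑ h ∈ Finset.Icc 1 (2 ^ N),
          ((1 - S N h) * ∏ r ∈ Finset.range N,
            ((1 - S r (anc N h r)) *
              (if anc N h (r + 1) = 2 * anc N h r then R r (anc N h r)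
               else 1 - R r (anc N h r))))
      = 1 :=
  sum_msWeight_add_sum_remainder S R N

/-- Deterministic conservation identity: for any stopping and right-turn
probabilities in `[0,1]`, the multiscale stick-breaking weights up to scale `N` plus the
remainders `Δ (N,h) = (1 - S (N,h)) ∏_{r<N} (1 - S (r,aᵣ)) Tᵣ` at the leaves of scale `N`
sum to one. -/
theorem multiscale_stick_breaking_conservation
    (S R : ℕ → ℕ → ℝ)
    (hS : ∀ s h, S s h ∈ Set.Icc (0 : ℝ) 1) (hR : ∀ s h, R s h ∈ Set.Icc (0 : ℝ) 1)
    (N : ℕ) :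
    ∑ s ∈ Finset.range (N + 1), ∑ h ∈ Finset.Icc 1 (2 ^ s), msWeight S R s h +
        ∑ h ∈ Finset.Icc 1 (2 ^ N),
          ((1 - S N h) * ∏ r ∈ Finset.range N,
            ((1 - S r (anc N h r)) *
              (if anc N h (r + 1) = 2 * anc N h r then R r (anc N h r)
               else 1 - R r (anc N h r))))
      = 1 :=
  multiscale_stick_breaking_conservation_general S R N
end
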